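/- arXiv:1609.02260 — 2 statements merged into one kernel-verified Lean document; each statement's English description precedes it below -/
import Mathlib

section
/- Let (X, m_Γ, ℤ^d-action, x_1,…,x_n, e_1,…,e_l) be a d-dimensional topological crystal and let R_Γ be a ℤ^d-periodic potential, i.e. functions R_Γ : V(X) → ℝ and R_Γ : A(X) → ℝ with R_Γ(ē) = R_Γ(e), R_Γ(μ·x) = R_Γ(x) and R_Γ(μ·e) = R_Γ(e) for all μ ∈ ℤ^d. Let H₀ := D(X, m_Γ) + R_Γ act on cochains by H₀(f₀, f₁) = (d* f₁ + R_Γ·f₀, d f₀ + R_Γ·f₁), where d and d* are taken with respect to the weight m_Γ. Define h₀ : 𝕋^d → M_{n+l}(ℂ) by: h₀(ξ)_{jℓ} = R_Γ(x_j)·δ_{jℓ} for 1 ≤ j, ℓ ≤ n; h₀(ξ)_{jℓ} = R_Γ(e_{j−n})·δ_{jℓ} for n+1 ≤ j, ℓ ≤ n+l; and for 1 ≤ j ≤ n and n+1 ≤ ℓ ≤ n+l, writing 𝔢 := e_{ℓ−n}, h₀(ξ)_{jℓ} = (m_Γ(𝔢)/m_Γ(x_j))^(1/2)·( −[o(𝔢)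 = x_j] + e(−ξ·η(𝔢))·[t(𝔢) ∈ ℤ^d·x_j] ) and h₀(ξ)_{ℓj} = (m_Γ(𝔢)/m_Γ(x_j))^(1/2)·( −[o(𝔢) = x_j] + e(ξ·η(𝔢))·[t(𝔢) ∈ ℤ^d·x_j] ), where [P] equals 1 if the condition P holds and 0 otherwise. Then for every finitely supported f ∈ l²(X, m_Γ) and every ξ ∈ 𝕋^d one has (W(H₀ f))(ξ) = h₀(ξ)·(Wf)(ξ); in particular H₀ is unitarily equivalent, via the Floquet transform W, to the operator of multiplication by the hermitian-matrix-valued trigonometric-polynomial (hence real-analytic) function h₀ on L²(𝕋^d; ℂ^(n+l)). -/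
open MeasureTheory
open scoped Classical BigOperators

/-- A graph: countable sets of vertices and oriented edges, origin/terminus maps and the
edge-reversal involution. -/
structure DirGraph where
  V : Type
  A : Type
  countV : Countable V
  countA : Countable A
  o : A → V
  t : A → V
  bar : A → A
  bar_bar : ∀ e, bar (bar e) = e
  bar_ne : ∀ e, bar e ≠ e
  o_bar : ∀ e, o (bar e) = t e
  t_bar : ∀ e, t (bar e) = o e

/-- A weight on a graph. -/
structure Weight (G : DirGraph) where
  mV : G.V → ℝ
  mA : G.A → ℝ
  mV_pos : ∀ x, 0 < mV x
  mA_pos : ∀ e, 0 < mA e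
  mA_bar : ∀ e, mA (G.bar e) = mA e

/-- The coboundary operator `(d f)(e) = f(t e) - f(o e)`. -/
def dCob (G : DirGraph) (f : G.V → ℂ) : G.A → ℂ :=
  fun e => f (G.t e) - f (G.o e)

/-- The boundary operator `(d* g)(x) = -Σ_{e ∈ A_x} (m(e)/m(x)) g(e)`. -/
noncomputable def dBound (G : DirGraph) (m : Weight G) (g : G.A → ℂ) : G.V → ℂ :=
  fun x => -∑ᶠ e ∈ {e | G.o e = x}, ((m.mA e / m.mV x : ℝ) : ℂ) * g e

/-- A `d`-dimensional topological crystal: a locally finite weighted graph with a free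
`ℤ^d`-action preserving all the structure, together with representatives `x_1,…,x_n` of
the vertex orbits and `e_1,…,e_l` of the (unoriented) edge orbits. -/
structure TopCrystal (d n l : ℕ) extends DirGraph where
  locFin : ∀ x : V, {e : A | o e = x}.Finite
  w : Weight toDirGraph
  actV : (Fin d → ℤ) → V → V
  actA : (Fin d → ℤ) → A → A
  actV_zero : ∀ x, actV 0 x = x
  actV_add : ∀ μ ν x, actV (μ + ν) x = actV μ (actV ν x)
  actA_zero : ∀ e, actA 0 e = e
  actA_add : ∀ μ ν e, actA (μ + ν) e = actA μ (actA ν e)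
  act_o : ∀ μ e, o (actA μ e) = actV μ (o e)
  act_t : ∀ μ e, t (actA μ e) = actV μ (t e)
  act_bar : ∀ μ e, bar (actA μ e) = actA μ (bar e)
  w_actV : ∀ μ x, w.mV (actV μ x) = w.mV x
  w_actA : ∀ μ e, w.mA (actA μ e) = w.mA e
  xv : Fin n → V
  eA : Fin l → A
  o_eA : ∀ j, ∃ i, o (eA j) = xv i
  uniqV : ∀ v : V, ∃! p : (Fin d → ℤ) × Fin n, actV p.1 (xv p.2) = v
  uniqA : ∀ a : A, ∃! p : (Fin d → ℤ) × Fin l,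
    Xor' (actA p.1 (eA p.2) = a) (actA p.1 (bar (eA p.2)) = a)

/-- The entire part `[v] ∈ ℤ^d` of a vertex. -/
noncomputable def TopCrystal.ent {d n l : ℕ} (X : TopCrystal d n l) (v : X.V) : Fin d → ℤ :=
  (X.uniqV v).choose.1

/-- The index `η(e) = [t(e)] - [o(e)]` of an oriented edge. -/
noncomputable def TopCrystal.eta {d n l : ℕ} (X : TopCrystal d n l) (e : X.A) : Fin d → ℤ :=
  X.ent (X.t e) - X.ent (X.o e)

/-- The `d`-dimensional torus with its Haar probability measure. -/
abbrev Torus (d : ℕ) := Fin d → AddCircle (1 : ℝ)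

/-- The character `e(ξ·μ) = exp(2πi Σ_j ξ_j μ_j)`. -/
noncomputable def eChar {d : ℕ} (ξ : Torus d) (μ : Fin d → ℤ) : ℂ :=
  fourier 1 (∑ j, μ j • ξ j)

/-- The Floquet transform of a (finitely supported) element of `l²(X, m_Γ)`. -/
noncomputable def floquet {d n l : ℕ} (X : TopCrystal d n l)
    (f0 : X.V → ℂ) (f1 : X.A → ℂ) (ξ : Torus d) : Fin n ⊕ Fin l → ℂ :=
  Sum.elim
    (fun j => (Real.sqrt (X.w.mV (X.xv j)) : ℂ) *
      ∑' μ : Fin d → ℤ, eChar ξ (-μ) * f0 (X.actV μ (X.xv j)))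
    (fun j => (Real.sqrt (X.w.mA (X.eA j)) : ℂ) *
      ∑' μ : Fin d → ℤ, eChar ξ (-μ) * f1 (X.actA μ (X.eA j)))

/-!
Every vertex is uniquely `μ·x_j` and every oriented edge uniquely `μ·e_ℓ` or `μ·ē_ℓ`. Hence the
edges leaving `μ·x_j` are the `μ·e_ℓ` with `o(e_ℓ) = x_j` together with the `(μ - η(e_ℓ))·ē_ℓ`
with `t(e_ℓ) ∈ ℤ^d·x_j`, while `t(μ·e_ℓ) = (μ + η(e_ℓ))·x_{j'}` for `t(e_ℓ) ∈ ℤ^d·x_{j'}`. On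
the orbit functions `μ ↦ f₀(μ·x_j)` and `μ ↦ f₁(μ·e_ℓ)` the operators `d`, `d*` (using
`f₁(ē) = -f₁(e)`) and the periodic potential therefore act as finite combinations of lattice
translations with constant coefficients. The lattice sum `∑_μ e(-ξ·μ) φ(μ)` turns translation
by `ν` into multiplication by `e(ξ·ν)`, and the factors `m_Γ^{1/2}` in `W` turn the
coefficients `m(e)/m(x)` of `d*` into the symmetric factors `(m(e)/m(x))^{1/2}` of `h₀(ξ)`.
-/

open Function

lemma eChar_add {d : ℕ} (ξ : Torus d) (μ ν : Fin d → ℤ) :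
    eChar ξ (μ + ν) = eChar ξ μ * eChar ξ ν := by
  simp only [eChar, Pi.add_apply, add_smul, Finset.sum_add_distrib, fourier_apply, one_zsmul,
    AddCircle.toCircle_add, Circle.coe_mul]

section LatticeFourier

variable {d : ℕ} (ξ : Torus d)

noncomputable def latticeFourier (φ : (Fin d → ℤ) → ℂ) : ℂ :=
  ∑' μ, eChar ξ (-μ) * φ μ

variable {φ ψ : (Fin d → ℤ) → ℂ}

lemma summable_eChar_mul (hφ : φ.HasFiniteSupport) :
    Summable fun μ => eChar ξ (-μ) * φ μ :=
  summable_of_hasFiniteSupport (by fun_prop)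

lemma latticeFourier_add (hφ : φ.HasFiniteSupport) (hψ : ψ.HasFiniteSupport) :
    latticeFourier ξ (fun μ => φ μ + ψ μ) = latticeFourier ξ φ + latticeFourier ξ ψ := by
  simp only [latticeFourier, mul_add]
  exact (summable_eChar_mul ξ hφ).tsum_add (summable_eChar_mul ξ hψ)

lemma latticeFourier_sub (hφ : φ.HasFiniteSupport) (hψ : ψ.HasFiniteSupport) :
    latticeFourier ξ (fun μ => φ μ - ψ μ) = latticeFourier ξ φ - latticeFourier ξ ψ := by
  simp only [latticeFourier, mul_sub]
  exact (summable_eChar_mul ξ hφ).tsum_sub (summable_eChar_mul ξ hψ)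

lemma latticeFourier_neg : latticeFourier ξ (fun μ => -φ μ) = -latticeFourier ξ φ := by
  simp only [latticeFourier, mul_neg, tsum_neg]

lemma latticeFourier_const_mul (c : ℂ) :
    latticeFourier ξ (fun μ => c * φ μ) = c * latticeFourier ξ φ := by
  simp only [latticeFourier, mul_left_comm _ c, tsum_mul_left]

lemma latticeFourier_sum {ι : Type*} (s : Finset ι) (φ : ι → (Fin d → ℤ) → ℂ)
    (hφ : ∀ i ∈ s, (φ i).HasFiniteSupport) :
    latticeFourier ξ (fun μ => ∑ i ∈ s, φ i μ) = ∑ i ∈ s, latticeFourier ξ (φ i) := by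
  simp only [latticeFourier, Finset.mul_sum]
  exact Summable.tsum_finsetSum fun i hi => summable_eChar_mul ξ (hφ i hi)

lemma latticeFourier_comp_add (φ : (Fin d → ℤ) → ℂ) (ν : Fin d → ℤ) :
    latticeFourier ξ (fun μ => φ (μ + ν)) = eChar ξ ν * latticeFourier ξ φ := by
  rw [latticeFourier, ← (Equiv.subRight ν).tsum_eq, latticeFourier, ← tsum_mul_left]
  congr 1 with μ
  rw [Equiv.subRight_apply, sub_add_cancel, neg_sub, sub_eq_add_neg, eChar_add, mul_assoc]

lemma latticeFourier_comp_sub (φ : (Fin d → ℤ) → ℂ) (ν : Fin d → ℤ) :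
    latticeFourier ξ (fun μ => φ (μ - ν)) = eChar ξ (-ν) * latticeFourier ξ φ := by
  simp only [sub_eq_add_neg, latticeFourier_comp_add]

end LatticeFourier

lemma sqrt_mul_div_eq_sqrt_div_mul_sqrt {a : ℝ} (ha : 0 < a) (b : ℝ) (hb : 0 ≤ b) :
    √a * (b / a) = √(b / a) * √b := by
  have hsa : 0 < √a := Real.sqrt_pos.2 ha
  rw [Real.sqrt_div hb, div_mul_eq_mul_div, Real.mul_self_sqrt hb, eq_div_iff hsa.ne',
    mul_right_comm, Real.mul_self_sqrt ha.le, mul_div_cancel₀ _ ha.ne']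

namespace TopCrystal

variable {d n l : ℕ} (X : TopCrystal d n l)

lemma actA_injective (μ : Fin d → ℤ) : Injective (X.actA μ) :=
  LeftInverse.injective (g := X.actA (-μ)) fun e => by
    rw [← X.actA_add, neg_add_cancel, X.actA_zero]

lemma actV_xv_eq_actV_xv_iff {μ ν : Fin d → ℤ} {i i' : Fin n} :
    X.actV μ (X.xv i) = X.actV ν (X.xv i') ↔ μ = ν ∧ i = i' := by
  refine ⟨fun h => ?_, fun ⟨hμ, hi⟩ => hμ ▸ hi ▸ rfl⟩
  obtain ⟨_, -, huniq⟩ := X.uniqV (X.actV ν (X.xv i'))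
  exact Prod.ext_iff.1 ((huniq (μ, i) h).trans (huniq (ν, i') rfl).symm)

lemma xv_injective : Injective X.xv := fun i i' h =>
  (X.actV_xv_eq_actV_xv_iff (μ := 0) (ν := 0)).1 (by rw [h]) |>.2

noncomputable def orbitIdx (v : X.V) : Fin n := (X.uniqV v).choose.2

lemma actV_ent_xv_orbitIdx (v : X.V) : X.actV (X.ent v) (X.xv (X.orbitIdx v)) = v :=
  (X.uniqV v).choose_spec.1

lemma ent_actV_xv (μ : Fin d → ℤ) (i : Fin n) : X.ent (X.actV μ (X.xv i)) = μ :=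
  (X.actV_xv_eq_actV_xv_iff.1 (X.actV_ent_xv_orbitIdx _)).1

lemma actV_left_injective (v : X.V) : Injective fun μ => X.actV μ v :=
    fun μ ν (h : X.actV μ v = X.actV ν v) => by
  rw [← X.actV_ent_xv_orbitIdx v, ← X.actV_add, ← X.actV_add, X.actV_xv_eq_actV_xv_iff] at h
  exact add_right_cancel h.1

lemma actA_left_injective (e : X.A) : Injective fun μ => X.actA μ e := fun μ ν h =>
  X.actV_left_injective (X.o e) (by simpa only [X.act_o] using congrArg X.o h)

noncomputable def srcIdx (ℓ : Fin l) : Fin n := (X.o_eA ℓ).choose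

noncomputable def tgtIdx (ℓ : Fin l) : Fin n := X.orbitIdx (X.t (X.eA ℓ))

lemma o_eA_eq (ℓ : Fin l) : X.o (X.eA ℓ) = X.xv (X.srcIdx ℓ) := (X.o_eA ℓ).choose_spec

lemma eta_eA (ℓ : Fin l) : X.eta (X.eA ℓ) = X.ent (X.t (X.eA ℓ)) := by
  have h := X.ent_actV_xv 0 (X.srcIdx ℓ)
  rw [X.actV_zero, ← X.o_eA_eq] at h
  rw [eta, h, sub_zero]

lemma t_eA_eq (ℓ : Fin l) : X.t (X.eA ℓ) = X.actV (X.eta (X.eA ℓ)) (X.xv (X.tgtIdx ℓ)) := by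
  rw [eta_eA, tgtIdx, actV_ent_xv_orbitIdx]

lemma o_eA_eq_xv_iff (ℓ : Fin l) (j : Fin n) : X.o (X.eA ℓ) = X.xv j ↔ X.srcIdx ℓ = j := by
  rw [X.o_eA_eq, X.xv_injective.eq_iff]

lemma exists_t_eA_eq_iff (ℓ : Fin l) (j : Fin n) :
    (∃ μ, X.t (X.eA ℓ) = X.actV μ (X.xv j)) ↔ X.tgtIdx ℓ = j := by
  simp only [X.t_eA_eq, X.actV_xv_eq_actV_xv_iff, exists_and_right, exists_eq', true_and]

lemma o_actA_eA (μ : Fin d → ℤ) (ℓ : Fin l) :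
    X.o (X.actA μ (X.eA ℓ)) = X.actV μ (X.xv (X.srcIdx ℓ)) := by
  rw [X.act_o, X.o_eA_eq]

lemma t_actA_eA (μ : Fin d → ℤ) (ℓ : Fin l) :
    X.t (X.actA μ (X.eA ℓ)) = X.actV (μ + X.eta (X.eA ℓ)) (X.xv (X.tgtIdx ℓ)) := by
  rw [X.act_t, X.t_eA_eq, X.actV_add]

lemma o_actA_bar_eA (μ : Fin d → ℤ) (ℓ : Fin l) :
    X.o (X.actA μ (X.bar (X.eA ℓ))) = X.actV (μ + X.eta (X.eA ℓ)) (X.xv (X.tgtIdx ℓ)) := by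
  rw [← X.act_bar, X.o_bar, X.t_actA_eA]

noncomputable def edgeOfCoord (p : (Fin l × Bool) × (Fin d → ℤ)) : X.A :=
  X.actA p.2 (if p.1.2 then X.eA p.1.1 else X.bar (X.eA p.1.1))

lemma actA_eA_ne_actA_bar_eA (μ : Fin d → ℤ) (ℓ : Fin l) :
    X.actA μ (X.eA ℓ) ≠ X.actA μ (X.bar (X.eA ℓ)) := fun h =>
  X.bar_ne _ (X.actA_injective μ h).symm

lemma xor_edgeOfCoord (p : (Fin l × Bool) × (Fin d → ℤ)) :
    Xor (X.actA p.2 (X.eA p.1.1) = X.edgeOfCoord p)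
      (X.actA p.2 (X.bar (X.eA p.1.1)) = X.edgeOfCoord p) := by
  rcases p with ⟨⟨ℓ, _ | _⟩, μ⟩
  · exact Or.inr ⟨rfl, X.actA_eA_ne_actA_bar_eA μ ℓ⟩
  · exact Or.inl ⟨rfl, (X.actA_eA_ne_actA_bar_eA μ ℓ).symm⟩

lemma edgeOfCoord_bijective : Bijective X.edgeOfCoord := by
  refine ⟨fun p p' h => ?_, fun e => ?_⟩
  · obtain ⟨_, -, huniq⟩ := X.uniqA (X.edgeOfCoord p')
    have hp := huniq (p.2, p.1.1) (h ▸ X.xor_edgeOfCoord p)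
    obtain ⟨hμ, hℓ⟩ := Prod.ext_iff.1 (hp.trans (huniq (p'.2, p'.1.1) (X.xor_edgeOfCoord p')).symm)
    rcases p with ⟨⟨ℓ, b⟩, μ⟩
    rcases p' with ⟨⟨ℓ', b'⟩, μ'⟩
    dsimp only at hμ hℓ
    subst hμ hℓ
    have hne := X.actA_eA_ne_actA_bar_eA μ ℓ
    cases b <;> cases b' <;> simp_all [edgeOfCoord, eq_comm]
  · obtain ⟨⟨μ, ℓ⟩, hx | hx, -⟩ := X.uniqA e
    · exact ⟨((ℓ, true), μ), hx.1⟩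
    · exact ⟨((ℓ, false), μ), hx.1⟩

noncomputable def edgeEquiv : (Fin l × Bool) × (Fin d → ℤ) ≃ X.A :=
  Equiv.ofBijective _ X.edgeOfCoord_bijective

lemma finsum_mem_o_eq_actV_xv {M : Type*} [AddCommMonoid M] (g : X.A → M) (μ : Fin d → ℤ)
    (j : Fin n) :
    ∑ᶠ e ∈ {e | X.o e = X.actV μ (X.xv j)}, g e =
      ∑ ℓ, ((if X.srcIdx ℓ = j then g (X.actA μ (X.eA ℓ)) else 0) +
        (if X.tgtIdx ℓ = j then g (X.actA (μ - X.eta (X.eA ℓ)) (X.bar (X.eA ℓ))) else 0)) := by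
  set s := {e | X.o e = X.actV μ (X.xv j)}
  have hfin : (fun p => s.indicator g (X.edgeEquiv p)).HasFiniteSupport :=
    HasFiniteSupport.comp_of_injective X.edgeEquiv.injective
      ((X.locFin _).subset Set.support_indicator_subset)
  rw [finsum_mem_def, ← finsum_comp_equiv X.edgeEquiv, finsum_curry _ hfin,
    finsum_eq_sum_of_fintype, Fintype.sum_prod_type]
  refine Finset.sum_congr rfl fun ℓ _ => ?_
  rw [Fintype.sum_bool]
  congr 1
  · rw [finsum_eq_single _ μ fun ν hν => by
      simp [edgeEquiv, edgeOfCoord, s, o_actA_eA, actV_xv_eq_actV_xv_iff, hν]]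
    simp [edgeEquiv, edgeOfCoord, Set.indicator_apply, s, o_actA_eA, actV_xv_eq_actV_xv_iff]
  · rw [finsum_eq_single _ (μ - X.eta (X.eA ℓ)) fun ν hν => by
      simp [edgeEquiv, edgeOfCoord, s, o_actA_bar_eA, actV_xv_eq_actV_xv_iff, ← eq_sub_iff_add_eq, hν]]
    simp [edgeEquiv, edgeOfCoord, Set.indicator_apply, s, o_actA_bar_eA, actV_xv_eq_actV_xv_iff]

lemma dBound_actV_xv {f1 : X.A → ℂ} (hf1 : ∀ e, f1 (X.bar e) = -f1 e) (μ : Fin d → ℤ)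
    (j : Fin n) :
    dBound X.toDirGraph X.w f1 (X.actV μ (X.xv j)) =
      -∑ ℓ, ((X.w.mA (X.eA ℓ) / X.w.mV (X.xv j) : ℝ) : ℂ) *
        ((if X.srcIdx ℓ = j then 1 else 0) * f1 (X.actA μ (X.eA ℓ)) -
          (if X.tgtIdx ℓ = j then 1 else 0) * f1 (X.actA (μ - X.eta (X.eA ℓ)) (X.eA ℓ))) := by
  rw [dBound, finsum_mem_o_eq_actV_xv]
  congr 1
  refine Finset.sum_congr rfl fun ℓ _ => ?_
  simp only [X.w_actV, X.w_actA, X.w.mA_bar, ← X.act_bar, hf1]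
  split_ifs <;> ring

lemma dCob_actA_eA (f0 : X.V → ℂ) (μ : Fin d → ℤ) (ℓ : Fin l) :
    dCob X.toDirGraph f0 (X.actA μ (X.eA ℓ)) =
      f0 (X.actV (μ + X.eta (X.eA ℓ)) (X.xv (X.tgtIdx ℓ))) - f0 (X.actV μ (X.xv (X.srcIdx ℓ))) := by
  rw [dCob, t_actA_eA, o_actA_eA]

lemma latticeFourier_dBound_add_mul (ξ : Torus d) {f0 : X.V → ℂ} {f1 : X.A → ℂ}
    (hf1 : ∀ e, f1 (X.bar e) = -f1 e) (hf0fin : f0.HasFiniteSupport)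
    (hf1fin : f1.HasFiniteSupport) {RV : X.V → ℝ} (hRV : ∀ μ x, RV (X.actV μ x) = RV x)
    (j : Fin n) :
    latticeFourier ξ (fun μ => dBound X.toDirGraph X.w f1 (X.actV μ (X.xv j)) +
        (RV (X.actV μ (X.xv j)) : ℂ) * f0 (X.actV μ (X.xv j))) =
      -∑ ℓ, ((X.w.mA (X.eA ℓ) / X.w.mV (X.xv j) : ℝ) : ℂ) *
          ((if X.srcIdx ℓ = j then 1 else 0) -
            (if X.tgtIdx ℓ = j then 1 else 0) * eChar ξ (-X.eta (X.eA ℓ))) *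
          latticeFourier ξ (fun μ => f1 (X.actA μ (X.eA ℓ))) +
        (RV (X.xv j) : ℂ) * latticeFourier ξ (fun μ => f0 (X.actV μ (X.xv j))) := by
  simp only [X.dBound_actV_xv hf1, hRV]
  rw [latticeFourier_add _ ?_ ?_, latticeFourier_neg, latticeFourier_sum _ _ _ ?_,
    latticeFourier_const_mul]
  · congr 2
    refine Finset.sum_congr rfl fun ℓ _ => ?_
    rw [latticeFourier_const_mul, latticeFourier_sub _ ?_ ?_, latticeFourier_const_mul,
      latticeFourier_const_mul, latticeFourier_comp_sub ξ (fun μ => f1 (X.actA μ (X.eA ℓ)))]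
    · ring
    all_goals fun_prop (disch := first
      | exact X.actA_left_injective _ | exact (X.actA_left_injective _).comp sub_left_injective)
  all_goals fun_prop (disch := first
    | exact X.actA_left_injective _ | exact X.actV_left_injective _
    | exact (X.actA_left_injective _).comp sub_left_injective)

lemma latticeFourier_dCob_add_mul (ξ : Torus d) {f0 : X.V → ℂ} {f1 : X.A → ℂ}
    (hf0fin : f0.HasFiniteSupport) (hf1fin : f1.HasFiniteSupport) {RA : X.A → ℝ}
    (hRA : ∀ μ e, RA (X.actA μ e) = RA e) (ℓ : Fin l) :
    latticeFourier ξ (fun μ => dCob X.toDirGraph f0 (X.actA μ (X.eA ℓ)) +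
        (RA (X.actA μ (X.eA ℓ)) : ℂ) * f1 (X.actA μ (X.eA ℓ))) =
      eChar ξ (X.eta (X.eA ℓ)) * latticeFourier ξ (fun μ => f0 (X.actV μ (X.xv (X.tgtIdx ℓ)))) -
        latticeFourier ξ (fun μ => f0 (X.actV μ (X.xv (X.srcIdx ℓ)))) +
        (RA (X.eA ℓ) : ℂ) * latticeFourier ξ (fun μ => f1 (X.actA μ (X.eA ℓ))) := by
  simp only [X.dCob_actA_eA, hRA]
  rw [latticeFourier_add _ ?_ ?_, latticeFourier_sub _ ?_ ?_, latticeFourier_const_mul,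
    latticeFourier_comp_add ξ (fun μ => f0 (X.actV μ (X.xv (X.tgtIdx ℓ))))]
  all_goals fun_prop (disch := first
    | exact X.actA_left_injective _ | exact X.actV_left_injective _
    | exact (X.actV_left_injective _).comp (add_left_injective _))

lemma floquet_eq (f0 : X.V → ℂ) (f1 : X.A → ℂ) (ξ : Torus d) :
    floquet X f0 f1 ξ =
      Sum.elim (fun j => (√(X.w.mV (X.xv j)) : ℂ) *
          latticeFourier ξ (fun μ => f0 (X.actV μ (X.xv j))))
        (fun ℓ => (√(X.w.mA (X.eA ℓ)) : ℂ) *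
          latticeFourier ξ (fun μ => f1 (X.actA μ (X.eA ℓ)))) :=
  rfl

noncomputable def fiberMatrix (RV : X.V → ℝ) (RA : X.A → ℝ) (ξ : Torus d) :
    Matrix (Fin n ⊕ Fin l) (Fin n ⊕ Fin l) ℂ :=
  Matrix.fromBlocks (Matrix.diagonal fun j => (RV (X.xv j) : ℂ))
    (Matrix.of fun j ℓ => (√(X.w.mA (X.eA ℓ) / X.w.mV (X.xv j)) : ℂ) *
      (-(if X.srcIdx ℓ = j then 1 else 0) +
        eChar ξ (-X.eta (X.eA ℓ)) * (if X.tgtIdx ℓ = j then 1 else 0)))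
    (Matrix.of fun ℓ j => (√(X.w.mA (X.eA ℓ) / X.w.mV (X.xv j)) : ℂ) *
      (-(if X.srcIdx ℓ = j then 1 else 0) +
        eChar ξ (X.eta (X.eA ℓ)) * (if X.tgtIdx ℓ = j then 1 else 0)))
    (Matrix.diagonal fun ℓ => (RA (X.eA ℓ) : ℂ))

lemma floquet_hamiltonian_inl (ξ : Torus d) {f0 : X.V → ℂ} {f1 : X.A → ℂ}
    (hf1 : ∀ e, f1 (X.bar e) = -f1 e) (hf0fin : f0.HasFiniteSupport)
    (hf1fin : f1.HasFiniteSupport) {RV : X.V → ℝ} (hRV : ∀ μ x, RV (X.actV μ x) = RV x)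
    (RA : X.A → ℝ) (j : Fin n) :
    floquet X (fun x => dBound X.toDirGraph X.w f1 x + (RV x : ℂ) * f0 x)
        (fun e => dCob X.toDirGraph f0 e + (RA e : ℂ) * f1 e) ξ (Sum.inl j) =
      ((X.fiberMatrix RV RA ξ).mulVec (floquet X f0 f1 ξ)) (Sum.inl j) := by
  rw [floquet_eq, floquet_eq, fiberMatrix, Matrix.fromBlocks_mulVec, Sum.elim_inl, Sum.elim_inl,
    Pi.add_apply, Matrix.mulVec_diagonal]
  simp only [Function.comp_apply, Sum.elim_inl, Sum.elim_inr, Matrix.mulVec, dotProduct,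
    Matrix.of_apply]
  rw [X.latticeFourier_dBound_add_mul ξ hf1 hf0fin hf1fin hRV, mul_add, mul_neg, Finset.mul_sum,
    ← Finset.sum_neg_distrib, add_comm]
  congr 1
  · ring
  · refine Finset.sum_congr rfl fun ℓ _ => ?_
    have hsqrt : (√(X.w.mV (X.xv j)) : ℂ) * ((X.w.mA (X.eA ℓ) / X.w.mV (X.xv j) : ℝ) : ℂ) =
        (√(X.w.mA (X.eA ℓ) / X.w.mV (X.xv j)) : ℂ) * (√(X.w.mA (X.eA ℓ)) : ℂ) := by
      exact_mod_cast sqrt_mul_div_eq_sqrt_div_mul_sqrt (X.w.mV_pos _) _ (X.w.mA_pos _).le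
    linear_combination (-((if X.srcIdx ℓ = j then 1 else 0) -
        (if X.tgtIdx ℓ = j then 1 else 0) * eChar ξ (-X.eta (X.eA ℓ))) *
      latticeFourier ξ (fun μ => f1 (X.actA μ (X.eA ℓ)))) * hsqrt

lemma floquet_hamiltonian_inr (ξ : Torus d) {f0 : X.V → ℂ} {f1 : X.A → ℂ}
    (hf0fin : f0.HasFiniteSupport) (hf1fin : f1.HasFiniteSupport) (RV : X.V → ℝ)
    {RA : X.A → ℝ} (hRA : ∀ μ e, RA (X.actA μ e) = RA e) (ℓ : Fin l) :
    floquet X (fun x => dBound X.toDirGraph X.w f1 x + (RV x : ℂ) * f0 x)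
        (fun e => dCob X.toDirGraph f0 e + (RA e : ℂ) * f1 e) ξ (Sum.inr ℓ) =
      ((X.fiberMatrix RV RA ξ).mulVec (floquet X f0 f1 ξ)) (Sum.inr ℓ) := by
  rw [floquet_eq, floquet_eq, fiberMatrix, Matrix.fromBlocks_mulVec, Sum.elim_inr, Sum.elim_inr,
    Pi.add_apply, Matrix.mulVec_diagonal]
  simp only [Function.comp_apply, Sum.elim_inl, Sum.elim_inr, Matrix.mulVec, dotProduct,
    Matrix.of_apply]
  rw [X.latticeFourier_dCob_add_mul ξ hf0fin hf1fin hRA]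
  have hsqrt (j : Fin n) : (√(X.w.mA (X.eA ℓ) / X.w.mV (X.xv j)) : ℂ) * (√(X.w.mV (X.xv j)) : ℂ) =
      (√(X.w.mA (X.eA ℓ)) : ℂ) := by
    rw [← Complex.ofReal_mul, Real.sqrt_div (X.w.mA_pos _).le,
      div_mul_cancel₀ _ (Real.sqrt_pos.2 (X.w.mV_pos _)).ne']
  have hterm (j : Fin n) :
      (√(X.w.mA (X.eA ℓ) / X.w.mV (X.xv j)) : ℂ) *
          (-(if X.srcIdx ℓ = j then 1 else 0) +
            eChar ξ (X.eta (X.eA ℓ)) * (if X.tgtIdx ℓ = j then 1 else 0)) *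
          ((√(X.w.mV (X.xv j)) : ℂ) * latticeFourier ξ (fun μ => f0 (X.actV μ (X.xv j)))) =
        -(if X.srcIdx ℓ = j then (√(X.w.mA (X.eA ℓ)) : ℂ) *
            latticeFourier ξ (fun μ => f0 (X.actV μ (X.xv j))) else 0) +
          eChar ξ (X.eta (X.eA ℓ)) * (if X.tgtIdx ℓ = j then (√(X.w.mA (X.eA ℓ)) : ℂ) *
            latticeFourier ξ (fun μ => f0 (X.actV μ (X.xv j))) else 0) := by
    rw [← hsqrt j]
    split_ifs <;> ring
  simp only [hterm, Finset.sum_add_distrib, Finset.sum_neg_distrib, ← Finset.mul_sum,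
    Finset.sum_ite_eq, Finset.mem_univ, if_true]
  ring

end TopCrystal

theorem floquet_gaussBonnet_fibered_general {d n l : ℕ} (X : TopCrystal d n l)
    (RΓV : X.V → ℝ) (RΓA : X.A → ℝ)
    (hRΓperV : ∀ μ x, RΓV (X.actV μ x) = RΓV x)
    (hRΓperA : ∀ μ e, RΓA (X.actA μ e) = RΓA e)
    (h0 : Torus d → Matrix (Fin n ⊕ Fin l) (Fin n ⊕ Fin l) ℂ)
    (hh0diagV : ∀ (ξ : Torus d) (j j' : Fin n),
      h0 ξ (Sum.inl j) (Sum.inl j') = if j = j' then (RΓV (X.xv j) : ℂ) else 0)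
    (hh0diagA : ∀ (ξ : Torus d) (j j' : Fin l),
      h0 ξ (Sum.inr j) (Sum.inr j') = if j = j' then (RΓA (X.eA j) : ℂ) else 0)
    (hh0VA : ∀ (ξ : Torus d) (j : Fin n) (ℓ : Fin l),
      h0 ξ (Sum.inl j) (Sum.inr ℓ) =
        (Real.sqrt (X.w.mA (X.eA ℓ) / X.w.mV (X.xv j)) : ℂ) *
          (-(if X.o (X.eA ℓ) = X.xv j then 1 else 0) +
            eChar ξ (-(X.eta (X.eA ℓ))) *
              (if ∃ μ, X.t (X.eA ℓ) = X.actV μ (X.xv j) then 1 else 0)))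
    (hh0AV : ∀ (ξ : Torus d) (j : Fin n) (ℓ : Fin l),
      h0 ξ (Sum.inr ℓ) (Sum.inl j) =
        (Real.sqrt (X.w.mA (X.eA ℓ) / X.w.mV (X.xv j)) : ℂ) *
          (-(if X.o (X.eA ℓ) = X.xv j then 1 else 0) +
            eChar ξ (X.eta (X.eA ℓ)) *
              (if ∃ μ, X.t (X.eA ℓ) = X.actV μ (X.xv j) then 1 else 0)))
    (f0 : X.V → ℂ) (f1 : X.A → ℂ)
    (hf1 : ∀ e, f1 (X.bar e) = -f1 e)
    (hf0fin : (Function.support f0).Finite)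
    (hf1fin : (Function.support f1).Finite)
    (ξ : Torus d) :
    floquet X
      (fun x => dBound X.toDirGraph X.w f1 x + (RΓV x : ℂ) * f0 x)
      (fun e => dCob X.toDirGraph f0 e + (RΓA e : ℂ) * f1 e) ξ
      = Matrix.mulVec (h0 ξ) (floquet X f0 f1 ξ) := by
  have hfiber : h0 ξ = X.fiberMatrix RΓV RΓA ξ := by
    ext (j | ℓ) (j' | ℓ') <;>
      simp [TopCrystal.fiberMatrix, Matrix.diagonal_apply, hh0diagV, hh0diagA, hh0VA, hh0AV,
        X.o_eA_eq_xv_iff, X.exists_t_eA_eq_iff]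
  rw [hfiber]
  funext k
  rcases k with j | ℓ
  · exact X.floquet_hamiltonian_inl ξ hf1 hf0fin hf1fin hRΓperV RΓA j
  · exact X.floquet_hamiltonian_inr ξ hf0fin hf1fin RΓV hRΓperA ℓ

/-- For a periodic potential `R_Γ`, the Floquet transform intertwines
`H₀ = D(X, m_Γ) + R_Γ` with multiplication by the hermitian matrix-valued analytic
function `h₀`. -/
theorem floquet_gaussBonnet_fibered {d n l : ℕ} (X : TopCrystal d n l)
    (RΓV : X.V → ℝ) (RΓA : X.A → ℝ)
    (hRΓbar : ∀ e, RΓA (X.bar e) = RΓA e)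
    (hRΓperV : ∀ μ x, RΓV (X.actV μ x) = RΓV x)
    (hRΓperA : ∀ μ e, RΓA (X.actA μ e) = RΓA e)
    (h0 : Torus d → Matrix (Fin n ⊕ Fin l) (Fin n ⊕ Fin l) ℂ)
    (hh0diagV : ∀ (ξ : Torus d) (j j' : Fin n),
      h0 ξ (Sum.inl j) (Sum.inl j') = if j = j' then (RΓV (X.xv j) : ℂ) else 0)
    (hh0diagA : ∀ (ξ : Torus d) (j j' : Fin l),
      h0 ξ (Sum.inr j) (Sum.inr j') = if j = j' then (RΓA (X.eA j) : ℂ) else 0)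
    (hh0VA : ∀ (ξ : Torus d) (j : Fin n) (ℓ : Fin l),
      h0 ξ (Sum.inl j) (Sum.inr ℓ) =
        (Real.sqrt (X.w.mA (X.eA ℓ) / X.w.mV (X.xv j)) : ℂ) *
          (-(if X.o (X.eA ℓ) = X.xv j then 1 else 0) +
            eChar ξ (-(X.eta (X.eA ℓ))) *
              (if ∃ μ, X.t (X.eA ℓ) = X.actV μ (X.xv j) then 1 else 0)))
    (hh0AV : ∀ (ξ : Torus d) (j : Fin n) (ℓ : Fin l),
      h0 ξ (Sum.inr ℓ) (Sum.inl j) =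
        (Real.sqrt (X.w.mA (X.eA ℓ) / X.w.mV (X.xv j)) : ℂ) *
          (-(if X.o (X.eA ℓ) = X.xv j then 1 else 0) +
            eChar ξ (X.eta (X.eA ℓ)) *
              (if ∃ μ, X.t (X.eA ℓ) = X.actV μ (X.xv j) then 1 else 0)))
    (f0 : X.V → ℂ) (f1 : X.A → ℂ)
    (hf1 : ∀ e, f1 (X.bar e) = -f1 e)
    (hf0fin : (Function.support f0).Finite)
    (hf1fin : (Function.support f1).Finite)
    (ξ : Torus d) :
    floquet X
      (fun x => dBound X.toDirGraph X.w f1 x + (RΓV x : ℂ) * f0 x)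
      (fun e => dCob X.toDirGraph f0 e + (RΓA e : ℂ) * f1 e) ξ
      = Matrix.mulVec (h0 ξ) (floquet X f0 f1 ξ) :=
  floquet_gaussBonnet_fibered_general X RΓV RΓA hRΓperV hRΓperA h0 hh0diagV hh0diagA hh0VA hh0AV f0
    f1 hf1 hf0fin hf1fin ξ
end

section
/- Let X be a locally finite graph carrying two weights m and m_Γ, and let 𝒥 denote the unitary operator from l²(X, m) to l²(X, m_Γ) given by (𝒥f)₀(x) = (m(x)/m_Γ(x))^(1/2) f₀(x) and (𝒥f)₁(e) = (m(e)/m_Γ(e))^(1/2) f₁(e). Let D(X, m) and D(X, m_Γ) denote the Gauss–Bonnet operators (with θ ≡ 1) for the respective weights. Then for every finitely supported f = (f₀, f₁) one has, for every vertex x, [(𝒥 D(X, m) 𝒥* − D(X, m_Γ)) f](x) = Σ_{e ∈ A_x} ( m_Γ(e)/m_Γ(x) − (m_Γ(e)^(1/2) m(e)^(1/2))/(m_Γ(x)^(1/2) m(x)^(1/2)) ) f₁(e), and for every oriented edge e, [(𝒥 D(X, m) 𝒥* − D(X, m_Γ)) f](e) = ( (m_Γ(t(e))^(1/2) m(e)^(1/2))/(m_Γ(e)^(1/2)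 m(t(e))^(1/2)) − 1 )·f₀(t(e)) + ( 1 − (m_Γ(o(e))^(1/2) m(e)^(1/2))/(m_Γ(e)^(1/2) m(o(e))^(1/2)) )·f₀(o(e)). -/
open MeasureTheory
open scoped Classical BigOperators

lemma sqrt_aux (a b c d : ℝ) (ha : 0 < a) (hb : 0 < b) (hc : 0 < c) (hd : 0 ≤ d) :
    Real.sqrt (a / b) * (c / a) * Real.sqrt (d / c) =
      Real.sqrt d * Real.sqrt c / (Real.sqrt b * Real.sqrt a) := by
  rw [Real.sqrt_div ha.le, Real.sqrt_div hd c]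
  have ha' : Real.sqrt a * Real.sqrt a = a := Real.mul_self_sqrt ha.le
  have hc' : Real.sqrt c * Real.sqrt c = c := Real.mul_self_sqrt hc.le
  have hsa : 0 < Real.sqrt a := Real.sqrt_pos.mpr ha
  have hsb : 0 < Real.sqrt b := Real.sqrt_pos.mpr hb
  have hsc : 0 < Real.sqrt c := Real.sqrt_pos.mpr hc
  set sa := Real.sqrt a
  set sb := Real.sqrt b
  set sc := Real.sqrt c
  rw [← ha', ← hc']
  field_simp

lemma sqrt_aux2 (a b c d : ℝ) (hb : 0 ≤ b) (hc : 0 ≤ c) :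
    Real.sqrt (c / d) * Real.sqrt (b / a) =
      Real.sqrt b * Real.sqrt c / (Real.sqrt d * Real.sqrt a) := by
  rw [Real.sqrt_div hc d, Real.sqrt_div hb a]
  ring

/-- Comparison of the Gauss–Bonnet operators for two weights `m` and
`m_Γ` after conjugating by the unitary `𝒥 : l²(X, m) → l²(X, m_Γ)`:
explicit formulas for `(𝒥 D(X, m) 𝒥* - D(X, m_Γ)) f` on vertices and on edges. -/
theorem gaussBonnet_conjugated_difference (G : DirGraph)
    (hlf : ∀ x : G.V, {e : G.A | G.o e = x}.Finite)
    (m mΓ : Weight G)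
    (f0 : G.V → ℂ) (f1 : G.A → ℂ)
    (hf1 : ∀ e, f1 (G.bar e) = -f1 e)
    (hf0fin : (Function.support f0).Finite)
    (hf1fin : (Function.support f1).Finite) :
    (∀ x : G.V,
      (Real.sqrt (m.mV x / mΓ.mV x) : ℂ) *
          dBound G m (fun e => (Real.sqrt (mΓ.mA e / m.mA e) : ℂ) * f1 e) x
        - dBound G mΓ f1 x
      = ∑ᶠ e ∈ {e | G.o e = x},
          ((mΓ.mA e / mΓ.mV x
              - Real.sqrt (mΓ.mA e) * Real.sqrt (m.mA e)
                / (Real.sqrt (mΓ.mV x) * Real.sqrt (m.mV x)) : ℝ) : ℂ) * f1 e)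
    ∧ (∀ e : G.A,
      (Real.sqrt (m.mA e / mΓ.mA e) : ℂ) *
          dCob G (fun x => (Real.sqrt (mΓ.mV x / m.mV x) : ℂ) * f0 x) e
        - dCob G f0 e
      = ((Real.sqrt (mΓ.mV (G.t e)) * Real.sqrt (m.mA e)
              / (Real.sqrt (mΓ.mA e) * Real.sqrt (m.mV (G.t e))) - 1 : ℝ) : ℂ)
            * f0 (G.t e)
        + ((1 - Real.sqrt (mΓ.mV (G.o e)) * Real.sqrt (m.mA e)
              / (Real.sqrt (mΓ.mA e) * Real.sqrt (m.mV (G.o e))) : ℝ) : ℂ)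
            * f0 (G.o e)) := by
  constructor
  · intro x
    simp only [dBound]
    rw [finsum_mem_eq_finite_toFinset_sum _ (hlf x), finsum_mem_eq_finite_toFinset_sum _ (hlf x),
      finsum_mem_eq_finite_toFinset_sum _ (hlf x)]
    rw [mul_neg, sub_neg_eq_add, neg_add_eq_sub, Finset.mul_sum,
      ← Finset.sum_sub_distrib]
    refine Finset.sum_congr rfl fun e _ => ?_
    have hR := sqrt_aux (m.mV x) (mΓ.mV x) (m.mA e) (mΓ.mA e)
      (m.mV_pos x) (mΓ.mV_pos x) (m.mA_pos e) (mΓ.mA_pos e).le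
    have hC : ((Real.sqrt (m.mV x / mΓ.mV x) * (m.mA e / m.mV x) *
        Real.sqrt (mΓ.mA e / m.mA e) : ℝ) : ℂ)
        = ((Real.sqrt (mΓ.mA e) * Real.sqrt (m.mA e) /
            (Real.sqrt (mΓ.mV x) * Real.sqrt (m.mV x)) : ℝ) : ℂ) := by
      exact_mod_cast hR
    push_cast at hC ⊢
    have hmv : (m.mV x : ℂ) ≠ 0 := by
      exact_mod_cast (m.mV_pos x).ne'
    linear_combination -f1 e * hC
  · intro e
    simp only [dCob]
    have h1 := sqrt_aux2 (m.mV (G.t e)) (mΓ.mV (G.t e)) (m.mA e) (mΓ.mA e)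
      (mΓ.mV_pos (G.t e)).le (m.mA_pos e).le
    have h2 := sqrt_aux2 (m.mV (G.o e)) (mΓ.mV (G.o e)) (m.mA e) (mΓ.mA e)
      (mΓ.mV_pos (G.o e)).le (m.mA_pos e).le
    have h1C : ((Real.sqrt (m.mA e / mΓ.mA e) *
        Real.sqrt (mΓ.mV (G.t e) / m.mV (G.t e)) : ℝ) : ℂ)
        = ((Real.sqrt (mΓ.mV (G.t e)) * Real.sqrt (m.mA e) /
            (Real.sqrt (mΓ.mA e) * Real.sqrt (m.mV (G.t e))) : ℝ) : ℂ) := by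
      exact_mod_cast h1
    have h2C : ((Real.sqrt (m.mA e / mΓ.mA e) *
        Real.sqrt (mΓ.mV (G.o e) / m.mV (G.o e)) : ℝ) : ℂ)
        = ((Real.sqrt (mΓ.mV (G.o e)) * Real.sqrt (m.mA e) /
            (Real.sqrt (mΓ.mA e) * Real.sqrt (m.mV (G.o e))) : ℝ) : ℂ) := by
      exact_mod_cast h2
    push_cast at h1C h2C ⊢
    linear_combination f0 (G.t e) * h1C - f0 (G.o e) * h2C
end
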